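/- Let t_assign be defined on a totally ordered queue of vehicles k_1 < k_2 < ... < k_m in one lane by t_assign(k_1) = max(t_min(k_1), J' + Δ_T) and t_assign(k_{j+1}) = max(t_min(k_{j+1}), t_assign(k_j) + Δ_{t,1}) for j ≥ 1. If t_min(k_{j+1}) ≤ t_min(k_j) + Δ_{t,1} for all j (i.e., minimal times along the queue rise by at most the headway), then t_assign(k_m) = max(t_assign(k_1) + (m−1)·Δ_{t,1}, t_min(k_m)). -/
import Mathlib


/-- Constant-time objective update for a continuous queue (Appendix C):
with `t_assign 1 = max(t_min 1, J' + Δ_T)` and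
`t_assign (j+1) = max(t_min (j+1), t_assign j + Δ₁)`, if the minimal times along
the queue rise by at most the headway (`t_min (j+1) ≤ t_min j + Δ₁`), then
`t_assign m = max(t_assign 1 + (m−1)·Δ₁, t_min m)`. -/
theorem queue_constant_time_update (m : ℕ) (hm : 1 ≤ m)
    (tmin tassign : ℕ → ℝ) (J' ΔT Δ1 : ℝ) (hΔT : 0 < ΔT) (hΔ1 : 0 < Δ1)
    (hfirst : tassign 1 = max (tmin 1) (J' + ΔT))
    (hrec : ∀ j : ℕ, 1 ≤ j → j < m →
      tassign (j + 1) = max (tmin (j + 1)) (tassign j + Δ1))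
    (hmono : ∀ j : ℕ, 1 ≤ j → j < m → tmin (j + 1) ≤ tmin j + Δ1) :
    tassign m = max (tassign 1 + ((m - 1 : ℕ) : ℝ) * Δ1) (tmin m) := by
  have key : ∀ j : ℕ, 1 ≤ j → j ≤ m →
      tmin j ≤ tassign 1 + ((j - 1 : ℕ) : ℝ) * Δ1 ∧
      tassign j = tassign 1 + ((j - 1 : ℕ) : ℝ) * Δ1 := by
    intro j hj
    induction j, hj using Nat.le_induction with
    | base =>
      intro _
      constructor
      · simp [hfirst]
      · simp
    | succ j hj ih =>
      intro hjm
      have hjm' : j < m := lt_of_lt_of_le (Nat.lt_succ_self j) hjm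
      obtain ⟨h1, h2⟩ := ih hjm'.le
      have hcast : ((j + 1 - 1 : ℕ) : ℝ) * Δ1 = ((j - 1 : ℕ) : ℝ) * Δ1 + Δ1 := by
        have : (j + 1 - 1 : ℕ) = (j - 1) + 1 := by omega
        rw [this]; push_cast; ring
      have hle : tmin (j + 1) ≤ tassign j + Δ1 := by
        calc tmin (j + 1) ≤ tmin j + Δ1 := hmono j hj hjm'
        _ ≤ tassign j + Δ1 := by rw [h2]; linarith
      constructor
      · rw [hcast]; linarith [hle, h2.symm.le]
      · rw [hrec j hj hjm', max_eq_right hle, h2, hcast]; ring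
  obtain ⟨h1, h2⟩ := key m hm le_rfl
  rw [h2, max_eq_left h1]
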